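/- Every profinite abelian group (compact Hausdorff totally disconnected abelian group) that is torsion free is a projective object in the category of profinite abelian groups: its Pontryagin dual is a divisible discrete abelian group, hence injective, and conversely. -/

import Mathlib

/-- The discrete group `ℚ/ℤ`. -/
def QZ : Type := ℚ ⧸ AddSubgroup.zmultiples (1 : ℚ)

noncomputable instance : AddCommGroup QZ :=
  inferInstanceAs (AddCommGroup (ℚ ⧸ AddSubgroup.zmultiples (1 : ℚ)))

instance : TopologicalSpace QZ := ⊥
instance : DiscreteTopology QZ := ⟨rfl⟩
instance : IsTopologicalAddGroup QZ where
  continuous_add := continuous_of_discreteTopology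
  continuous_neg := continuous_of_discreteTopology

/-- The subgroup of `C(M, P)` consisting of continuous additive homomorphisms. -/
def CHomAdd (M P : Type) [AddCommGroup M] [TopologicalSpace M]
    [AddCommGroup P] [TopologicalSpace P] [IsTopologicalAddGroup P] :
    AddSubgroup C(M, P) where
  carrier := {f | ∀ a b : M, f (a + b) = f a + f b}
  zero_mem' := by intro a b; simp
  add_mem' := by
    intro f g hf hg a b
    simp only [ContinuousMap.add_apply, hf a b, hg a b]
    abel
  neg_mem' := by
    intro f hf a b
    simp only [ContinuousMap.neg_apply, hf a b]
    abel

/-- The Pontryagin dual `Hom_cont(M, ℚ/ℤ)` with the compact-open topology. -/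
def PontDual (M : Type) [AddCommGroup M] [TopologicalSpace M] : Type :=
  CHomAdd M QZ

noncomputable instance (M : Type) [AddCommGroup M] [TopologicalSpace M] :
    AddCommGroup (PontDual M) :=
  inferInstanceAs (AddCommGroup (CHomAdd M QZ))

instance (M : Type) [AddCommGroup M] [TopologicalSpace M] :
    TopologicalSpace (PontDual M) :=
  inferInstanceAs (TopologicalSpace (CHomAdd M QZ))

instance (M : Type) [AddCommGroup M] [TopologicalSpace M] :
    IsTopologicalAddGroup (PontDual M) :=
  inferInstanceAs (IsTopologicalAddGroup (CHomAdd M QZ))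

/-- Evaluation of a Pontryagin character. -/
def PontDual.eval {M : Type} [AddCommGroup M] [TopologicalSpace M]
    (f : PontDual M) (m : M) : QZ :=
  f.1 m

/-- The canonical evaluation map into the double dual. -/
noncomputable def pontEval (M : Type) [AddCommGroup M] [TopologicalSpace M]
    [IsTopologicalAddGroup M] : M → PontDual (PontDual M) := fun m =>
  ⟨⟨fun f => PontDual.eval f m, by
      exact (continuous_eval_const m).comp continuous_subtype_val⟩, by
    intro a b
    show ((a + b).1 : C(M, QZ)) m = a.1 m + b.1 m
    rfl⟩

noncomputable def qzmk : ℚ →+ QZ := QuotientAddGroup.mk' (AddSubgroup.zmultiples (1 : ℚ))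
lemma qzmk_surjective : Function.Surjective qzmk := QuotientAddGroup.mk'_surjective _
lemma qzmk_eq_zero_iff (r : ℚ) : qzmk r = 0 ↔ ∃ z : ℤ, (z : ℚ) = r := by
  show ((r : ℚ ⧸ AddSubgroup.zmultiples (1 : ℚ))) = 0 ↔ _
  rw [QuotientAddGroup.eq_zero_iff]
  simp [AddSubgroup.mem_zmultiples_iff, zsmul_eq_mul]

lemma qz_tors_cyclic {q : ℕ} (hq : q.Prime) {t s : QZ} (ht : q • t = 0) (htne : t ≠ 0)
    (hs : q • s = 0) : ∃ z : ℤ, z • t = s := by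
  obtain ⟨r, rfl⟩ := qzmk_surjective t
  obtain ⟨r', rfl⟩ := qzmk_surjective s
  have hq0 : (q : ℚ) ≠ 0 := by exact_mod_cast hq.ne_zero
  rw [← map_nsmul, qzmk_eq_zero_iff] at ht hs
  obtain ⟨a, ha⟩ := ht
  obtain ⟨b, hb⟩ := hs
  have hr : (q : ℚ) * r = a := by rw [ha]; rw [nsmul_eq_mul]
  have hr' : (q : ℚ) * r' = b := by rw [hb]; rw [nsmul_eq_mul]
  have hnd : ¬ ((q : ℤ) ∣ a) := by
    rintro ⟨m, rfl⟩
    apply htne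
    rw [qzmk_eq_zero_iff]
    refine ⟨m, ?_⟩
    have : ((q : ℚ)) * m = (q : ℚ) * r := by push_cast at hr ⊢; linarith [hr]
    exact (mul_left_cancel₀ hq0 this)
  have hcop : IsCoprime (a : ℤ) (q : ℤ) := by
    rw [Int.isCoprime_iff_gcd_eq_one]
    have h1 : Nat.Coprime q a.natAbs := (Nat.Prime.coprime_iff_not_dvd hq).mpr (by
      intro hd
      exact hnd (Int.natCast_dvd.mpr hd))
    simpa [Int.gcd] using h1.symm
  obtain ⟨u, v, huv⟩ := hcop
  refine ⟨u * b, ?_⟩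
  rw [← map_zsmul, ← sub_eq_zero, ← map_sub, qzmk_eq_zero_iff]
  refine ⟨-(b * v), ?_⟩
  have huvQ : (u : ℚ) * a + v * q = 1 := by exact_mod_cast huv
  have key : (q : ℚ) * (-(b * v) : ℤ) = q * ((u * b : ℤ) • r - r') := by
    rw [zsmul_eq_mul]
    push_cast
    linear_combination (-(u : ℚ) * b) * hr + hr' + (-(b : ℚ)) * huvQ
  exact (mul_left_cancel₀ hq0 key).symm ▸ rfl

/-- `QZ` is divisible. -/
lemma qz_divisible (n : ℕ) (hn : n ≠ 0) (t : QZ) : ∃ u : QZ, n • u = t := by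
  obtain ⟨r, rfl⟩ := qzmk_surjective t
  refine ⟨qzmk (r / n), ?_⟩
  rw [← map_nsmul]
  congr 1
  rw [nsmul_eq_mul]
  field_simp

/-- the `n`-torsion of `QZ` is finite. -/
lemma qz_tors_finite (n : ℕ) (hn : n ≠ 0) : {t : QZ | n • t = 0}.Finite := by
  have : {t : QZ | n • t = 0} ⊆ Set.range (fun a : Fin n => qzmk ((a : ℚ) / n)) := by
    intro t ht
    obtain ⟨r, rfl⟩ := qzmk_surjective t
    simp only [Set.mem_setOf_eq, ← map_nsmul, qzmk_eq_zero_iff] at ht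
    obtain ⟨a, ha⟩ := ht
    have hn0 : (n : ℚ) ≠ 0 := by exact_mod_cast hn
    have hr : r = (a : ℚ) / n := by
      rw [nsmul_eq_mul] at ha
      field_simp
      linarith [ha]
    have hpos : 0 < (n : ℤ) := by exact_mod_cast Nat.pos_of_ne_zero hn
    refine ⟨⟨(a % n).toNat, ?_⟩, ?_⟩
    · have h1 : 0 ≤ a % n := Int.emod_nonneg a (by exact_mod_cast hn)
      have h2 : a % n < n := Int.emod_lt_of_pos a hpos
      omega
    · simp only
      rw [← sub_eq_zero, ← map_sub, qzmk_eq_zero_iff]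
      refine ⟨-(a / n), ?_⟩
      have h1 : 0 ≤ a % n := Int.emod_nonneg a (by exact_mod_cast hn)
      have h3 : ((a % n).toNat : ℤ) = a % n := Int.toNat_of_nonneg h1
      have : ((a % n).toNat : ℚ) = ((a % n : ℤ) : ℚ) := by exact_mod_cast h3
      rw [hr, this]
      have hmod : (a % n : ℤ) = a - n * (a / n) := Int.emod_def a n
      have : ((a % n : ℤ) : ℚ) = (a : ℚ) - n * ((a / n : ℤ) : ℚ) := by exact_mod_cast hmod
      rw [this]
      push_cast
      field_simp
      ring
  exact Set.Finite.subset (Set.finite_range _) this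

lemma qz_fiber_finite (n : ℕ) (hn : n ≠ 0) (s : QZ) : {t : QZ | n • t = s}.Finite := by
  rcases Set.eq_empty_or_nonempty {t : QZ | n • t = s} with h | ⟨t₀, ht₀⟩
  · rw [h]; exact Set.finite_empty
  · have : {t : QZ | n • t = s} ⊆ (fun u => t₀ + u) '' {t : QZ | n • t = 0} := by
      intro t ht
      refine ⟨t - t₀, ?_, by show t₀ + (t - t₀) = t; rw [add_comm, sub_add_cancel]⟩
      show n • (t - t₀) = 0
      rw [smul_sub, show n • t = s from ht, show n • t₀ = s from ht₀, sub_self]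
    exact Set.Finite.subset ((qz_tors_finite n hn).image _) this

/-- Open subgroups form a basis of neighbourhoods of 0 in a profinite group. -/
lemma exists_open_addSubgroup {G : Type*} [AddGroup G] [TopologicalSpace G]
    [IsTopologicalAddGroup G] [CompactSpace G] [T2Space G] [TotallyDisconnectedSpace G]
    {U : Set G} (hU : IsOpen U) (h0 : (0 : G) ∈ U) :
    ∃ W : AddSubgroup G, IsOpen (W : Set G) ∧ (W : Set G) ⊆ U := by
  obtain ⟨V, hV, h0V, hVU⟩ := compact_exists_isClopen_in_isOpen hU h0
  obtain ⟨H, hH⟩ := IsTopologicalAddGroup.exist_openAddSubgroup_sub_clopen_nhds_of_zero hV h0V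
  exact ⟨H.toAddSubgroup, H.isOpen, hH.trans hVU⟩

/-- A hom into `QZ` vanishing on an open subgroup is continuous. -/
lemma continuous_of_vanishing {G : Type*} [AddCommGroup G] [TopologicalSpace G]
    [IsTopologicalAddGroup G] {W : AddSubgroup G} (hW : IsOpen (W : Set G))
    (χ : G →+ QZ) (hker : ∀ w ∈ W, χ w = 0) : Continuous χ := by
  rw [continuous_def]
  intro s _
  rw [isOpen_iff_forall_mem_open]
  intro x hx
  refine ⟨(fun w => x + w) '' (W : Set G), ?_, ?_, ⟨0, W.zero_mem, by simp⟩⟩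
  · rintro _ ⟨w, hw, rfl⟩
    simpa [map_add, hker w hw] using hx
  · exact (Homeomorph.addLeft x).isOpen_image.mpr hW

noncomputable def toQZ : AddCircle (1 : ℚ) →+ QZ :=
  { toFun := id, map_zero' := rfl, map_add' := fun _ _ => rfl }

/-- Character separating a point from an open subgroup. -/
lemma exists_char {G : Type*} [AddCommGroup G] [TopologicalSpace G] [IsTopologicalAddGroup G]
    [CompactSpace G] (W : AddSubgroup G) (hW : IsOpen (W : Set G)) {k : G} (hk : k ∉ W) :
    ∃ χ : G →+ QZ, Continuous χ ∧ χ k ≠ 0 ∧ ∀ w ∈ W, χ w = 0 := by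
  have : Finite (G ⧸ W) := AddSubgroup.quotient_finite_of_isOpen W hW
  have hk' : (QuotientAddGroup.mk' W) k ≠ 0 := by
    rw [Ne, QuotientAddGroup.mk'_apply, QuotientAddGroup.eq_zero_iff]
    exact hk
  obtain ⟨c, hc⟩ := CharacterModule.exists_character_apply_ne_zero_of_ne_zero hk'
  refine ⟨toQZ.comp ((c : (G ⧸ W) →+ AddCircle (1 : ℚ)).comp (QuotientAddGroup.mk' W)),
    ?_, ?_, ?_⟩
  · refine continuous_of_vanishing hW _ (fun w hw => ?_)
    have h0 : (QuotientAddGroup.mk' W) w = 0 := by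
      rw [QuotientAddGroup.mk'_apply, QuotientAddGroup.eq_zero_iff]; exact hw
    show toQZ (c (QuotientAddGroup.mk' W w)) = 0
    rw [h0, map_zero, map_zero]
  · exact hc
  · intro w hw
    have h0 : (QuotientAddGroup.mk' W) w = 0 := by
      rw [QuotientAddGroup.mk'_apply, QuotientAddGroup.eq_zero_iff]; exact hw
    show toQZ (c (QuotientAddGroup.mk' W w)) = 0
    rw [h0, map_zero, map_zero]

lemma sep_char {P : Type*} [AddCommGroup P] [TopologicalSpace P] [IsTopologicalAddGroup P]
    [CompactSpace P] [T2Space P] [TotallyDisconnectedSpace P] {y : P} (hy : y ≠ 0) :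
    ∃ χ : P →+ QZ, Continuous χ ∧ χ y ≠ 0 := by
  obtain ⟨W, hWo, hWs⟩ := exists_open_addSubgroup (U := {y}ᶜ)
    (isClosed_singleton.isOpen_compl) (by simpa using (Ne.symm hy))
  obtain ⟨χ, h1, h2, _⟩ := exists_char W hWo (k := y) (fun h => hWs h rfl)
  exact ⟨χ, h1, h2⟩

lemma pullback_exists {P : Type} [AddCommGroup P] [TopologicalSpace P] [IsTopologicalAddGroup P]
    [CompactSpace P] [T2Space P] [TotallyDisconnectedSpace P]
    (hproj : ∀ (M : Type) (_ : AddCommGroup M) (_ : TopologicalSpace M),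
        ∀ (_ : IsTopologicalAddGroup M) (_ : CompactSpace M) (_ : T2Space M)
          (_ : TotallyDisconnectedSpace M)
          (f : M →+ P) (_ : Continuous f) (_ : Function.Surjective f),
          ∃ s : P →+ M, Continuous s ∧ ∀ x : P, f (s x) = x)
    (χ : P →+ QZ) (hχ : Continuous χ) (n : ℕ) (hn : n ≠ 0) :
    ∃ ψ : P →+ QZ, Continuous ψ ∧ ∀ x, n • ψ x = χ x := by
  set G : AddSubgroup (P × QZ) :=
    { carrier := {x | n • x.2 = χ x.1}
      zero_mem' := by simp
      add_mem' := by
        intro a b ha hb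
        simp only [Set.mem_setOf_eq] at *
        rw [Prod.snd_add, Prod.fst_add, smul_add, ha, hb, map_add]
      neg_mem' := by
        intro a ha
        simp only [Set.mem_setOf_eq] at *
        rw [Prod.snd_neg, Prod.fst_neg, smul_neg, ha, map_neg] } with hG
  have hmem : ∀ x : P × QZ, x ∈ G ↔ n • x.2 = χ x.1 := fun x => Iff.rfl
  have hcl : IsClosed (G : Set (P × QZ)) := by
    have h : (G : Set (P × QZ)) = (fun x : P × QZ => n • x.2 - χ x.1) ⁻¹' {0} := by
      ext x
      simp only [Set.mem_preimage, Set.mem_singleton_iff, sub_eq_zero, SetLike.mem_coe, hmem]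
    rw [h]
    apply IsClosed.preimage
    · exact (((continuous_of_discreteTopology (α := QZ)
        (f := fun t : QZ => n • t))).comp continuous_snd).sub (hχ.comp continuous_fst)
    · exact isClosed_singleton
  have hT : {t : QZ | n • t ∈ Set.range χ}.Finite := by
    have h1 : (Set.range χ).Finite := (isCompact_range hχ).finite_of_discrete
    have h2 : {t : QZ | n • t ∈ Set.range χ} ⊆ ⋃ s ∈ Set.range χ, {t | n • t = s} := by
      intro t ht
      exact Set.mem_biUnion ht rfl
    exact Set.Finite.subset (h1.biUnion (fun s _ => qz_fiber_finite n hn s)) h2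
  have hcomp : IsCompact (G : Set (P × QZ)) := by
    apply IsCompact.of_isClosed_subset (IsCompact.prod isCompact_univ hT.isCompact) hcl
    intro x hx
    exact ⟨trivial, ⟨x.1, ((hmem x).mp hx).symm⟩⟩
  haveI : CompactSpace G := isCompact_iff_compactSpace.mp hcomp
  let f : G →+ P := (AddMonoidHom.fst P QZ).comp G.subtype
  have hfc : Continuous f := continuous_fst.comp continuous_subtype_val
  have hfs : Function.Surjective f := by
    intro a
    obtain ⟨u, hu⟩ := qz_divisible n hn (χ a)
    exact ⟨⟨(a, u), hu⟩, rfl⟩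
  obtain ⟨s, hsc, hss⟩ := hproj G inferInstance inferInstance inferInstance inferInstance
      inferInstance inferInstance f hfc hfs
  refine ⟨(AddMonoidHom.snd P QZ).comp (G.subtype.comp s), ?_, ?_⟩
  · exact continuous_snd.comp (continuous_subtype_val.comp hsc)
  · intro x
    have h2 := (hmem _).mp (s x).2
    have h3 : ((s x) : P × QZ).1 = x := hss x
    rw [h3] at h2
    exact h2

open Pointwise in
lemma split_of_tf {M P : Type*}
    [AddCommGroup M] [TopologicalSpace M] [IsTopologicalAddGroup M]
    [CompactSpace M] [T2Space M] [TotallyDisconnectedSpace M]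
    [AddCommGroup P] [TopologicalSpace P] [IsTopologicalAddGroup P] [T2Space P]
    (htf : ∀ (x : P) (n : ℕ), n ≠ 0 → n • x = 0 → x = 0)
    (f : M →+ P) (hf : Continuous f) (hsurj : Function.Surjective f) :
    ∃ s : P →+ M, Continuous s ∧ ∀ x : P, f (s x) = x := by
  classical
  set 𝒮 : Set (Set M) :=
    {s | (∃ N : AddSubgroup M, (N : Set M) = s) ∧ IsClosed s ∧ ∀ p : P, ∃ m ∈ s, f m = p}
    with h𝒮
  -- Zorn's lemma gives a minimal element of 𝒮
  have hzorn : ∃ m, m ⊆ Set.univ ∧ Minimal (· ∈ 𝒮) m := by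
    apply zorn_superset_nonempty
    · intro c hc hchain hne
      have hsub : ∀ s ∈ c, ∃ N : AddSubgroup M, (N : Set M) = s := fun s hs => (hc hs).1
      let Nlb : AddSubgroup M :=
        { carrier := ⋂₀ c
          zero_mem' := Set.mem_sInter.mpr (fun s hs => by
            obtain ⟨N, rfl⟩ := hsub s hs; exact N.zero_mem)
          add_mem' := fun {a b} ha hb => Set.mem_sInter.mpr (fun s hs => by
            obtain ⟨N, rfl⟩ := hsub s hs
            exact N.add_mem (Set.mem_sInter.mp ha _ hs) (Set.mem_sInter.mp hb _ hs))
          neg_mem' := fun {a} ha => Set.mem_sInter.mpr (fun s hs => by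
            obtain ⟨N, rfl⟩ := hsub s hs
            exact N.neg_mem (Set.mem_sInter.mp ha _ hs)) }
      refine ⟨⋂₀ c, ⟨⟨Nlb, rfl⟩,
        isClosed_sInter (fun s hs => (hc hs).2.1), ?_⟩,
        fun s hs => Set.sInter_subset_of_mem hs⟩
      intro p
      haveI hne' : Nonempty c := hne.to_subtype
      have key := IsCompact.nonempty_iInter_of_directed_nonempty_isCompact_isClosed
        (fun s : c => (s : Set M) ∩ f ⁻¹' {p}) ?_ ?_ ?_ ?_
      · obtain ⟨x, hx⟩ := key
        simp only [Set.mem_iInter, Set.mem_inter_iff, Set.mem_preimage,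
          Set.mem_singleton_iff] at hx
        refine ⟨x, Set.mem_sInter.mpr (fun s hs => (hx ⟨s, hs⟩).1),
          (hx (Classical.arbitrary _)).2⟩
      · intro i j
        rcases hchain.total i.2 j.2 with h | h
        · exact ⟨i, Set.Subset.refl _, Set.inter_subset_inter_left _ h⟩
        · exact ⟨j, Set.inter_subset_inter_left _ h, Set.Subset.refl _⟩
      · intro i
        obtain ⟨m, hm, hfm⟩ := (hc i.2).2.2 p
        exact ⟨m, hm, hfm⟩
      · intro i
        exact (((hc i.2).2.1.inter (isClosed_singleton.preimage hf))).isCompact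
      · intro i
        exact (hc i.2).2.1.inter (isClosed_singleton.preimage hf)
    · show (∃ N : AddSubgroup M, (N : Set M) = Set.univ) ∧ _ ∧ _
      exact ⟨⟨⊤, by simp⟩, isClosed_univ, fun p => by
        obtain ⟨m, hm⟩ := hsurj p; exact ⟨m, trivial, hm⟩⟩
  obtain ⟨mset, -, hmin⟩ := hzorn
  obtain ⟨⟨N, hNeq⟩, hNcl, hNsurj⟩ := hmin.prop
  subst hNeq
  -- the key claim : f is injective on N
  have hinj : ∀ k ∈ N, f k = 0 → k = 0 := by
    intro k₀ hk₀N hk₀f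
    by_contra hk₀
    -- an open subgroup avoiding k₀
    obtain ⟨W₀, hW₀o, hW₀s⟩ := exists_open_addSubgroup (U := {k₀}ᶜ)
      isClosed_singleton.isOpen_compl (by simpa using (Ne.symm hk₀))
    have hk₀W₀ : k₀ ∉ W₀ := fun h => hW₀s h rfl
    haveI : Finite (M ⧸ W₀) := AddSubgroup.quotient_finite_of_isOpen W₀ hW₀o
    set mkh := QuotientAddGroup.mk' W₀ with hmkh
    set K : AddSubgroup M := N ⊓ f.ker with hK
    have hk₀K : k₀ ∈ K := AddSubgroup.mem_inf.mpr ⟨hk₀N, (AddMonoidHom.mem_ker).mpr hk₀f⟩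
    set H : AddSubgroup (M ⧸ W₀) := K.map mkh with hH
    have hhH : mkh k₀ ∈ H := ⟨k₀, hk₀K, rfl⟩
    have hh0 : mkh k₀ ≠ 0 := by
      rw [Ne, QuotientAddGroup.mk'_apply, QuotientAddGroup.eq_zero_iff]
      exact hk₀W₀
    -- find a prime q and an element of H not of the form q • x
    set m := addOrderOf (mkh k₀) with hm
    have hmpos : 0 < m := addOrderOf_pos _
    have hm1 : m ≠ 1 := fun h1 => hh0 (by rwa [hm, AddMonoid.addOrderOf_eq_one_iff] at h1)
    set q := m.minFac with hq
    have hqp : q.Prime := Nat.minFac_prime hm1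
    have hqdvd : q ∣ m := Nat.minFac_dvd m
    set h' := (m / q) • (mkh k₀) with hh'
    have hqh' : q • h' = 0 := by
      rw [hh', smul_smul, Nat.mul_div_cancel' hqdvd, hm, addOrderOf_nsmul_eq_zero]
    have hh'0 : h' ≠ 0 := by
      intro h0
      have hdvd : m ∣ m / q := addOrderOf_dvd_of_nsmul_eq_zero (hm ▸ h0)
      have hlt : m / q < m := Nat.div_lt_self hmpos hqp.one_lt
      have h00 : m / q = 0 := Nat.eq_zero_of_dvd_of_lt hdvd hlt
      have : 0 < m / q := Nat.div_pos (Nat.le_of_dvd hmpos hqdvd) hqp.pos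
      omega
    have hh'H : h' ∈ H := AddSubgroup.nsmul_mem H hhH _
    -- multiplication by q is not surjective on H
    let g : H → H := fun x => ⟨q • (x : M ⧸ W₀), AddSubgroup.nsmul_mem H x.2 q⟩
    have hgni : ¬ Function.Injective g := by
      intro hginj
      have h1 : g ⟨h', hh'H⟩ = g ⟨0, H.zero_mem⟩ := by
        apply Subtype.ext
        show q • h' = q • (0 : M ⧸ W₀)
        rw [hqh', smul_zero]
      exact hh'0 (Subtype.ext_iff.mp (hginj h1))
    have hgns : ¬ Function.Surjective g :=
      fun hs => hgni (Finite.injective_iff_surjective.mpr hs)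
    obtain ⟨cbar, hcbar⟩ : ∃ y : H, ∀ x : H, g x ≠ y := by
      by_contra hcon
      push_neg at hcon
      exact hgns (fun y => hcon y)
    obtain ⟨c, hcK, hcmk⟩ := cbar.2
    have hcb : ∀ d ∈ H, q • d ≠ (cbar : M ⧸ W₀) := by
      intro d hd heq
      exact hcbar ⟨d, hd⟩ (Subtype.ext heq)
    have hcN : c ∈ N := (AddSubgroup.mem_inf.mp hcK).1
    have hcf : f c = 0 := (AddMonoidHom.mem_ker).mp (AddSubgroup.mem_inf.mp hcK).2
    let μ : M →+ M :=
      { toFun := fun x => q • x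
        map_zero' := smul_zero q
        map_add' := fun a b => smul_add q a b }
    set qN : AddSubgroup M := N.map μ with hqN
    set V : AddSubgroup M := K ⊓ W₀ with hV
    set B : AddSubgroup M := qN ⊔ V with hB
    have hcB : c ∉ B := by
      intro hcB
      obtain ⟨y, hy, z, hz, hyz⟩ := AddSubgroup.mem_sup.mp hcB
      obtain ⟨nn, hnn, rfl⟩ := hy
      have hzK : z ∈ K := (AddSubgroup.mem_inf.mp hz).1
      have hzW : z ∈ W₀ := (AddSubgroup.mem_inf.mp hz).2
      have hzf : f z = 0 := (AddMonoidHom.mem_ker).mp (AddSubgroup.mem_inf.mp hzK).2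
      have hnnK : nn ∈ K := by
        have h1 : q • f nn = 0 := by
          have h2 : μ nn = c - z := eq_sub_of_add_eq hyz
          have h3 : f (μ nn) = 0 := by
            rw [h2, map_sub, hcf, hzf, sub_zero]
          rw [← map_nsmul]
          exact h3
        have := htf (f nn) q hqp.ne_zero h1
        exact AddSubgroup.mem_inf.mpr ⟨hnn, (AddMonoidHom.mem_ker).mpr this⟩
      apply hcb (mkh nn) ⟨nn, hnnK, rfl⟩
      rw [← hcmk, ← hyz, map_add]
      have hz0 : mkh z = 0 := by
        rw [QuotientAddGroup.mk'_apply, QuotientAddGroup.eq_zero_iff]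
        exact hzW
      rw [hz0, add_zero]
      rfl
    -- B is a closed subgroup
    have hNcpt : IsCompact (N : Set M) := hNcl.isCompact
    have hqNcpt : IsCompact (qN : Set M) := by
      rw [hqN, AddSubgroup.coe_map]
      exact hNcpt.image (continuous_nsmul q)
    have hKset : (K : Set M) = (N : Set M) ∩ f ⁻¹' {0} := by
      ext x
      simp [hK, AddSubgroup.mem_inf, AddMonoidHom.mem_ker]
    have hKcl : IsClosed (K : Set M) := by
      rw [hKset]
      exact hNcl.inter (isClosed_singleton.preimage hf)
    have hW₀cl : IsClosed (W₀ : Set M) := AddSubgroup.isClosed_of_isOpen _ hW₀o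
    have hVcpt : IsCompact (V : Set M) := by
      rw [hV, AddSubgroup.coe_inf]
      exact (hKcl.inter hW₀cl).isCompact
    have hBset : (B : Set M) = (qN : Set M) + (V : Set M) := by
      ext x
      simp only [SetLike.mem_coe, hB, AddSubgroup.mem_sup, Set.mem_add]
    have hBcpt : IsCompact (B : Set M) := by
      rw [hBset]
      exact hqNcpt.add hVcpt
    have hBcl : IsClosed (B : Set M) := hBcpt.isClosed
    -- an open subgroup U₁ with (c + U₁) ∩ B = ∅
    have hOopen : IsOpen ((fun u => c + u) ⁻¹' (B : Set M)ᶜ) :=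
      (hBcl.isOpen_compl).preimage (continuous_const.add continuous_id)
    have h0O : (0 : M) ∈ (fun u => c + u) ⁻¹' (B : Set M)ᶜ := by
      simp only [Set.mem_preimage, add_zero, Set.mem_compl_iff, SetLike.mem_coe]
      exact hcB
    obtain ⟨U₁, hU₁o, hU₁s⟩ := exists_open_addSubgroup hOopen h0O
    set Wbig : AddSubgroup M := B ⊔ U₁ with hWbig
    have hWbigopen : IsOpen (Wbig : Set M) := by
      apply AddSubgroup.isOpen_of_mem_nhds
      exact Filter.mem_of_superset (hU₁o.mem_nhds U₁.zero_mem)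
        (SetLike.coe_subset_coe.mpr le_sup_right)
    have hcWbig : c ∉ Wbig := by
      intro hc
      obtain ⟨b, hb, u, hu, hbu⟩ := AddSubgroup.mem_sup.mp hc
      have h1 : -u ∈ U₁ := U₁.neg_mem hu
      have h2 := hU₁s h1
      apply h2
      show c + (-u) ∈ (B : Set M)
      have h3 : c + -u = b := by rw [← hbu]; abel
      rw [h3]
      exact hb
    obtain ⟨χ, hχc, hχk, hχW⟩ := exists_char Wbig hWbigopen hcWbig
    have hqχ : ∀ x ∈ N, q • χ x = 0 := by
      intro x hx
      rw [← map_nsmul]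
      apply hχW
      have h1 : q • x ∈ qN := ⟨x, hx, rfl⟩
      exact (le_sup_left : B ≤ Wbig) ((le_sup_left : qN ≤ B) h1)
    have hs'mem : ((N ⊓ χ.ker : AddSubgroup M) : Set M) ∈ 𝒮 := by
      refine ⟨⟨_, rfl⟩, ?_, ?_⟩
      · have h4 : ((N ⊓ χ.ker : AddSubgroup M) : Set M) = (N : Set M) ∩ χ ⁻¹' {0} := by
          ext x
          simp [AddSubgroup.mem_inf, AddMonoidHom.mem_ker]
        rw [h4]
        exact hNcl.inter (isClosed_singleton.preimage hχc)
      · intro p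
        obtain ⟨m₀, hm₀, hfm₀⟩ := hNsurj p
        by_cases hχm : χ m₀ = 0
        · exact ⟨m₀, AddSubgroup.mem_inf.mpr ⟨hm₀, (AddMonoidHom.mem_ker).mpr hχm⟩, hfm₀⟩
        · obtain ⟨z, hz⟩ := qz_tors_cyclic hqp (hqχ c hcN) hχk
            (show q • (-(χ m₀)) = 0 by rw [smul_neg, hqχ m₀ hm₀, neg_zero])
          refine ⟨m₀ + z • c, AddSubgroup.mem_inf.mpr
            ⟨N.add_mem hm₀ (N.zsmul_mem hcN z), (AddMonoidHom.mem_ker).mpr ?_⟩, ?_⟩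
          · rw [map_add, map_zsmul, hz]
            abel
          · rw [map_add, map_zsmul, hcf, smul_zero, add_zero]
            exact hfm₀
    have hsub' : ((N ⊓ χ.ker : AddSubgroup M) : Set M) ⊆ (N : Set M) :=
      SetLike.coe_subset_coe.mpr inf_le_left
    have hback := hmin.2 hs'mem hsub'
    have hcmem := hback hcN
    exact hχk ((AddMonoidHom.mem_ker).mp (AddSubgroup.mem_inf.mp hcmem).2)
  -- conclusion : f restricted to N is a continuous bijection, hence a homeomorphism
  have hbij : Function.Bijective (f.comp N.subtype) := by
    constructor
    · intro a b hab
      have h1 : f ((a : M) - b) = 0 := by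
        rw [map_sub, sub_eq_zero]
        exact hab
      have h2 : (a : M) - b ∈ N := N.sub_mem a.2 b.2
      exact Subtype.ext (sub_eq_zero.mp (hinj _ h2 h1))
    · intro p
      obtain ⟨m, hm, hfm⟩ := hNsurj p
      exact ⟨⟨m, hm⟩, hfm⟩
  haveI : CompactSpace N := isCompact_iff_compactSpace.mp hNcl.isCompact
  have hcont : Continuous (f.comp N.subtype) := hf.comp continuous_subtype_val
  let e : N ≃+ P := AddEquiv.ofBijective (f.comp N.subtype) hbij
  have hec : Continuous (e.toEquiv : N → P) := hcont
  let homeo := hec.homeoOfEquivCompactToT2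
  refine ⟨N.subtype.comp e.symm.toAddMonoidHom, ?_, ?_⟩
  · exact continuous_subtype_val.comp homeo.symm.continuous
  · intro x
    exact e.apply_symm_apply x

lemma pontdual_coe_nsmul {P : Type} [AddCommGroup P] [TopologicalSpace P]
    (m : ℕ) (u : PontDual P) : (m • u : PontDual P).1 = m • u.1 := by
  induction m with
  | zero => rw [zero_nsmul, zero_nsmul]; rfl
  | succ k ih =>
    rw [succ_nsmul, succ_nsmul, ← ih]
    exact AddSubgroup.coe_add _ _ _

/-- A profinite abelian group `P` is a projective object in the category
of profinite abelian groups (every continuous surjective homomorphism `M → P` of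
profinite abelian groups splits by a continuous homomorphism) if and only if it is
torsion free, and this holds if and only if its Pontryagin dual is a divisible
(discrete) abelian group, hence injective. -/
theorem stmt_17
    (P : Type) [AddCommGroup P] [TopologicalSpace P] [IsTopologicalAddGroup P]
    [CompactSpace P] [T2Space P] [TotallyDisconnectedSpace P] :
    ((∀ (x : P) (n : ℕ), n ≠ 0 → n • x = 0 → x = 0) ↔
      (∀ (M : Type) (_ : AddCommGroup M) (_ : TopologicalSpace M),
        ∀ (_ : IsTopologicalAddGroup M) (_ : CompactSpace M) (_ : T2Space M)
          (_ : TotallyDisconnectedSpace M)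
          (f : M →+ P) (_ : Continuous f) (_ : Function.Surjective f),
          ∃ s : P →+ M, Continuous s ∧ ∀ x : P, f (s x) = x)) ∧
    ((∀ (x : P) (n : ℕ), n ≠ 0 → n • x = 0 → x = 0) ↔
      (∀ (φ : PontDual P) (n : ℕ), n ≠ 0 → ∃ ψ : PontDual P, n • ψ = φ)) := by
  have iff1 : (∀ (x : P) (n : ℕ), n ≠ 0 → n • x = 0 → x = 0) ↔
      (∀ (M : Type) (_ : AddCommGroup M) (_ : TopologicalSpace M),
        ∀ (_ : IsTopologicalAddGroup M) (_ : CompactSpace M) (_ : T2Space M)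
          (_ : TotallyDisconnectedSpace M)
          (f : M →+ P) (_ : Continuous f) (_ : Function.Surjective f),
          ∃ s : P →+ M, Continuous s ∧ ∀ x : P, f (s x) = x) := by
    constructor
    · intro htf M _ _ _ _ _ _ f hfc hfs
      exact split_of_tf htf f hfc hfs
    · intro hproj x n hn hnx
      by_contra hx
      obtain ⟨χ, hχc, hχx⟩ := sep_char hx
      obtain ⟨ψ, hψc, hψ⟩ := pullback_exists hproj χ hχc n hn
      apply hχx
      rw [← hψ x, ← map_nsmul, hnx, map_zero]
  refine ⟨iff1, ?_, ?_⟩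
  · intro htf φ n hn
    have hproj := iff1.mp htf
    let χ : P →+ QZ := AddMonoidHom.mk' φ.1 φ.2
    have hχc : Continuous χ := φ.1.continuous
    obtain ⟨ψ, hψc, hψ⟩ := pullback_exists hproj χ hχc n hn
    refine ⟨⟨⟨ψ, hψc⟩, fun a b => map_add ψ a b⟩, ?_⟩
    apply Subtype.ext
    refine (pontdual_coe_nsmul n _).trans ?_
    apply ContinuousMap.ext
    intro x
    show n • (ψ x) = φ.1 x
    exact hψ x
  · intro hdiv x n hn hnx
    by_contra hx
    obtain ⟨χ, hχc, hχx⟩ := sep_char hx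
    obtain ⟨ψ, hψ⟩ := hdiv ⟨⟨χ, hχc⟩, fun a b => map_add χ a b⟩ n hn
    let ψh : P →+ QZ := AddMonoidHom.mk' ψ.1 ψ.2
    have h1 : (n • ψ : PontDual P).1 x = χ x := by rw [hψ]; rfl
    rw [pontdual_coe_nsmul] at h1
    have h2 : n • (ψ.1 x) = χ x := h1
    apply hχx
    have h3 : ψh (n • x) = χ x := by rw [map_nsmul]; exact h2
    rw [hnx, map_zero] at h3
    exact h3.symm
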